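/- arXiv:2509.10879 — 2 statements merged into one kernel-verified Lean document; each statement's English description precedes it below -/
import Mathlib

section
/- Let G(A) := ‖A‖² · det(A) on real symmetric n×n matrices, where ‖A‖² = tr(AᵀA). Then for all positive semidefinite A and all η ≥ 0, G(A + ηI) − G(A) ≥ n·η^{n+2}. -/
open Matrix

private lemma eig_ineq_aux {n : ℕ} (μ : Fin n → ℝ) (hμ : ∀ i, 0 ≤ μ i) (η : ℝ) (hη : 0 ≤ η) :
    (n : ℝ) * η ^ (n + 2) ≤
      (∑ i, (μ i + η) ^ 2) * (∏ i, (μ i + η)) - (∑ i, (μ i) ^ 2) * ∏ i, μ i := by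
  have hQη : η ^ n ≤ ∏ i, (μ i + η) := by
    calc η ^ n = ∏ _i : Fin n, η := by simp
    _ ≤ _ := Finset.prod_le_prod (fun i _ => hη) (fun i _ => by linarith [hμ i])
  have hPQ : ∏ i, μ i ≤ ∏ i, (μ i + η) :=
    Finset.prod_le_prod (fun i _ => hμ i) (fun i _ => by linarith)
  have hS0 : 0 ≤ ∑ i, (μ i) ^ 2 := Finset.sum_nonneg fun i _ => sq_nonneg _
  have hS' : (∑ i, (μ i) ^ 2) + n * η ^ 2 ≤ ∑ i, (μ i + η) ^ 2 := by
    have h : ∀ i ∈ Finset.univ (α := Fin n), (μ i) ^ 2 + η ^ 2 ≤ (μ i + η) ^ 2 := by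
      intro i _; nlinarith [hμ i]
    calc (∑ i, (μ i) ^ 2) + n * η ^ 2 = ∑ i : Fin n, ((μ i) ^ 2 + η ^ 2) := by
          rw [Finset.sum_add_distrib]; simp [mul_comm]
    _ ≤ _ := Finset.sum_le_sum h
  have hpow : η ^ (n + 2) = η ^ n * η ^ 2 := by ring
  have hQ0 : (0:ℝ) ≤ ∏ i, (μ i + η) := le_trans (by positivity) hQη
  nlinarith [mul_le_mul_of_nonneg_right hS' hQ0,
    mul_nonneg hS0 (sub_nonneg.2 hPQ),
    mul_le_mul_of_nonneg_left hQη (by positivity : (0:ℝ) ≤ (n:ℝ) * η ^ 2)]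

private lemma conj_facts_aux {n : ℕ} (U : Matrix (Fin n) (Fin n) ℝ) (hU1 : U * star U = 1)
    (hU2 : star U * U = 1) (d : Fin n → ℝ) :
    ((U * diagonal d * star U)ᵀ * (U * diagonal d * star U)).trace = ∑ i, (d i)^2 ∧
    (U * diagonal d * star U).det = ∏ i, d i := by
  have hsymm : (U * diagonal d * star U)ᵀ = U * diagonal d * star U := by
    simp [star_eq_conjTranspose, transpose_mul, diagonal_transpose, Matrix.mul_assoc]
  constructor
  · rw [hsymm]
    have h : (U * diagonal d * star U) * (U * diagonal d * star U)
        = U * (diagonal d * diagonal d) * star U := by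
      calc U * diagonal d * star U * (U * diagonal d * star U)
          = U * diagonal d * (star U * U) * diagonal d * star U := by
            simp only [Matrix.mul_assoc]
      _ = U * (diagonal d * diagonal d) * star U := by
            rw [hU2]; simp only [Matrix.mul_one, Matrix.mul_assoc]
    rw [h, Matrix.trace_mul_cycle, ← Matrix.mul_assoc, hU2, Matrix.one_mul,
      diagonal_mul_diagonal, trace_diagonal]
    exact Finset.sum_congr rfl fun i _ => (pow_two (d i)).symm
  · rw [det_mul, det_mul, det_diagonal]
    have h : U.det * (star U).det = 1 := by rw [← det_mul, hU1, det_one]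
    linear_combination (∏ i, d i) * h

/-- Tameness of the non-Gårding operator `G(A) = ‖A‖² · det A` (Frobenius norm):
for positive semidefinite real symmetric `A` and `η ≥ 0`,
`G(A + ηI) − G(A) ≥ n · η^(n+2)`. -/
theorem normSq_det_tame {n : ℕ} (A : Matrix (Fin n) (Fin n) ℝ) (hA : A.PosSemidef)
    (η : ℝ) (hη : 0 ≤ η) :
    (n : ℝ) * η ^ (n + 2) ≤
      ((A + η • 1)ᵀ * (A + η • 1)).trace * (A + η • 1).det - (Aᵀ * A).trace * A.det := by
  have hH := hA.1
  set U : Matrix (Fin n) (Fin n) ℝ := (hH.eigenvectorUnitary : Matrix (Fin n) (Fin n) ℝ)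
    with hUdef
  have hU2 : star U * U = 1 := by
    simpa [hUdef] using (unitary.star_mul_self hH.eigenvectorUnitary)
  have hU1 : U * star U = 1 := by
    simpa [hUdef] using (unitary.mul_star_self hH.eigenvectorUnitary)
  have hspec : A = U * diagonal hH.eigenvalues * star U := by
    simpa using hH.spectral_theorem
  have hspec2 : A + η • 1 = U * diagonal (fun i => hH.eigenvalues i + η) * star U := by
    have h : diagonal (fun i => hH.eigenvalues i + η) = diagonal hH.eigenvalues + η • 1 := by
      rw [← diagonal_one, ← diagonal_smul, diagonal_add]
      congr 1; funext i; simp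
    rw [h, Matrix.mul_add, Matrix.add_mul, ← hspec]
    congr 1
    rw [Matrix.mul_smul, Matrix.mul_one, Matrix.smul_mul, hU1]
  obtain ⟨ht1, hd1⟩ := conj_facts_aux U hU1 hU2 hH.eigenvalues
  obtain ⟨ht2, hd2⟩ := conj_facts_aux U hU1 hU2 (fun i => hH.eigenvalues i + η)
  rw [← hspec] at ht1 hd1
  rw [← hspec2] at ht2 hd2
  rw [ht1, hd1, ht2, hd2]
  exact eig_ineq_aux hH.eigenvalues (fun i => hA.eigenvalues_nonneg i) η hη
end

section
/- Let u : C → ℝ be λ-semiconvex on a convex open set C ⊂ ℝⁿ (i.e., u + (λ/2)|·|² is convex) and also μ-semiconcave (i.e., −u + (μ/2)|·|² is convex). Then u is differentiable on C and its gradient is locally Lipschitz, i.e. u ∈ C^{1,1}_loc(C). -/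
open Topology

open Set
open scoped RealInnerProductSpace

lemma exists_subgradient {n : ℕ} {C : Set (EuclideanSpace ℝ (Fin n))} (hCo : IsOpen C)
    (f : EuclideanSpace ℝ (Fin n) → ℝ) (hf : ConvexOn ℝ C f) {x : EuclideanSpace ℝ (Fin n)}
    (hx : x ∈ C) : ∃ p, ∀ y ∈ C, f x + ⟪p, y - x⟫ ≤ f y := by
  set s : Set (EuclideanSpace ℝ (Fin n) × ℝ) := {q | q.1 ∈ C ∧ f q.1 < q.2} with hs
  have hcont : ContinuousOn f C := hf.continuousOn hCo
  have hopen : IsOpen s := by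
    have h1 : ContinuousOn (fun q : EuclideanSpace ℝ (Fin n) × ℝ => q.2 - f q.1)
        (C ×ˢ (univ : Set ℝ)) := by
      apply ContinuousOn.sub continuousOn_snd
      exact hcont.comp continuousOn_fst (fun q hq => hq.1)
    have := h1.isOpen_inter_preimage (hCo.prod isOpen_univ) isOpen_Ioi (t := Ioi 0)
    convert this using 1
    ext q
    simp [hs, sub_pos, and_comm]
  have hconv : Convex ℝ s := hf.convex_strict_epigraph
  have hnot : (x, f x) ∉ s := by simp [hs]
  obtain ⟨F, hF⟩ := geometric_hahn_banach_open_point hconv hopen hnot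
  set c : ℝ := F (0, 1) with hc
  have hFdec : ∀ y : EuclideanSpace ℝ (Fin n), ∀ t : ℝ, F (y, t) = F (y, 0) + t * c := by
    intro y t
    have h2 : (y, t) = (y, (0:ℝ)) + t • ((0:EuclideanSpace ℝ (Fin n)), (1:ℝ)) := by
      simp [Prod.ext_iff]
    rw [h2, map_add, map_smul, smul_eq_mul, hc]
  have hcneg : c < 0 := by
    have := hF (x, f x + 1) ⟨hx, by show f x < f x + 1; linarith⟩
    rw [hFdec x (f x + 1), hFdec x (f x)] at this
    linarith
  have hcpos : 0 < -c := by linarith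
  have key : ∀ y ∈ C, F (y, 0) + f y * c ≤ F (x, 0) + f x * c := by
    intro y hy
    by_contra h
    push_neg at h
    set a := F (y, 0) + f y * c with ha
    set b := F (x, 0) + f x * c with hb
    have hstep : ∀ ε > (0:ℝ), a + ε * c < b := by
      intro ε hε
      have := hF (y, f y + ε) ⟨hy, by show f y < f y + ε; linarith⟩
      rw [hFdec y (f y + ε), hFdec x (f x)] at this
      calc a + ε * c = F (y, 0) + (f y + ε) * c := by rw [ha]; ring
        _ < b := this
    have h3 := hstep ((a - b) / (-2 * c)) (by apply div_pos (by linarith) (by linarith))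
    have h4 : (a - b) / (-2 * c) * c = -(a - b)/2 := by
      rw [div_mul_eq_mul_div, div_eq_div_iff (by linarith) (by norm_num)]
      ring
    rw [h4] at h3
    linarith
  set g : EuclideanSpace ℝ (Fin n) →L[ℝ] ℝ :=
    (-c)⁻¹ • (F.comp (ContinuousLinearMap.inl ℝ (EuclideanSpace ℝ (Fin n)) ℝ)) with hg
  refine ⟨(InnerProductSpace.toDual ℝ _).symm g, fun y hy => ?_⟩
  have hrepr : ⟪(InnerProductSpace.toDual ℝ _).symm g, y - x⟫ = (-c)⁻¹ * F (y - x, 0) := by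
    rw [InnerProductSpace.toDual_symm_apply]
    simp [hg]
  rw [hrepr]
  have hFlin : F (y - x, 0) = F (y, 0) - F (x, 0) := by
    have h5 : ((y - x, (0:ℝ)) : EuclideanSpace ℝ (Fin n) × ℝ) = (y, 0) - (x, 0) := by
      simp [Prod.ext_iff]
    rw [h5, map_sub]
  rw [hFlin]
  have hkey := key y hy
  have h6 : (-c)⁻¹ * (F (y, 0) - F (x, 0)) ≤ f y - f x := by
    rw [inv_mul_le_iff₀ hcpos]
    nlinarith
  linarith

lemma key_bound {n : ℕ} {C : Set (EuclideanSpace ℝ (Fin n))} (hCo : IsOpen C)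
    {u : EuclideanSpace ℝ (Fin n) → ℝ} {lam mu : ℝ} (hlam : 0 ≤ lam) (hmu : 0 ≤ mu)
    (hsc : ConvexOn ℝ C (fun x => u x + (lam / 2) * ‖x‖ ^ 2))
    (hscc : ConvexOn ℝ C (fun x => -u x + (mu / 2) * ‖x‖ ^ 2))
    {x : EuclideanSpace ℝ (Fin n)} (hx : x ∈ C) :
    ∃ v, ∀ y ∈ C, |u y - u x - ⟪v, y - x⟫| ≤ (max lam mu / 2) * ‖y - x‖ ^ 2 := by
  obtain ⟨p, hp⟩ := exists_subgradient hCo _ hsc hx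
  obtain ⟨q, hq⟩ := exists_subgradient hCo _ hscc hx
  beta_reduce at hp hq
  have hsq : ∀ y : EuclideanSpace ℝ (Fin n),
      ‖y‖ ^ 2 = ‖y - x‖ ^ 2 + 2 * ⟪x, y - x⟫ + ‖x‖ ^ 2 := by
    intro y
    rw [norm_sub_sq_real, inner_sub_right, real_inner_self_eq_norm_sq, real_inner_comm]
    ring
  set w := p + q - (lam + mu) • x with hwdef
  have hwin : ∀ y ∈ C, ⟪w, y - x⟫ ≤ ((lam + mu) / 2) * ‖y - x‖ ^ 2 := by
    intro y hy
    have h1 := hp y hy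
    have h2 := hq y hy
    have h3 := hsq y
    have hexp : ⟪w, y - x⟫ = ⟪p, y - x⟫ + ⟪q, y - x⟫ - (lam + mu) * ⟪x, y - x⟫ := by
      rw [hwdef, inner_sub_left, inner_add_left, real_inner_smul_left]
    rw [hexp]
    nlinarith [h1, h2, h3]
  have hw0 : w = 0 := by
    by_contra hw0
    have hwpos : 0 < ‖w‖ := norm_pos_iff.2 hw0
    obtain ⟨ε, hε, hball⟩ := Metric.isOpen_iff.1 hCo x hx
    set t := min (ε / (‖w‖ + 1)) (1 / ((lam + mu) + 1)) with htdef
    have ht : 0 < t := lt_min (by positivity) (by positivity)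
    have hty : x + t • w ∈ C := by
      apply hball
      rw [Metric.mem_ball, dist_eq_norm]
      have : ‖x + t • w - x‖ = t * ‖w‖ := by
        rw [add_sub_cancel_left, norm_smul, Real.norm_eq_abs, abs_of_pos ht]
      rw [this]
      have h4 : t ≤ ε / (‖w‖ + 1) := min_le_left _ _
      have h5 : t * ‖w‖ ≤ ε / (‖w‖ + 1) * ‖w‖ := by
        apply mul_le_mul_of_nonneg_right h4 hwpos.le
      have h6 : ε / (‖w‖ + 1) * ‖w‖ < ε := by
        rw [div_mul_eq_mul_div, div_lt_iff₀ (by positivity)]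
        nlinarith
      linarith
    have := hwin _ hty
    rw [add_sub_cancel_left, real_inner_smul_right, real_inner_self_eq_norm_sq] at this
    have hns : ‖t • w‖ = t * ‖w‖ := by
      rw [norm_smul, Real.norm_eq_abs, abs_of_pos ht]
    rw [hns] at this
    have h7 : t ≤ 1 / ((lam + mu) + 1) := min_le_right _ _
    have h8 : t * ((lam + mu) + 1) ≤ 1 := by
      rw [← le_div_iff₀ (by positivity)] at *
      exact h7
    nlinarith [sq_nonneg (‖w‖), mul_pos ht (mul_pos hwpos hwpos)]
  have hqeq : q = (lam + mu) • x - p := by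
    have : p + q - (lam + mu) • x = 0 := hw0
    rw [sub_eq_zero] at this
    rw [← this]
    abel
  refine ⟨p - lam • x, fun y hy => ?_⟩
  have h1 := hp y hy
  have h2 := hq y hy
  have h3 := hsq y
  have hv : ⟪p - lam • x, y - x⟫ = ⟪p, y - x⟫ - lam * ⟪x, y - x⟫ := by
    rw [inner_sub_left, real_inner_smul_left]
  have hqv : ⟪q, y - x⟫ = (lam + mu) * ⟪x, y - x⟫ - ⟪p, y - x⟫ := by
    rw [hqeq, inner_sub_left, real_inner_smul_left]
  have hM1 : lam ≤ max lam mu := le_max_left _ _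
  have hM2 : mu ≤ max lam mu := le_max_right _ _
  have hnn : (0:ℝ) ≤ ‖y - x‖ ^ 2 := sq_nonneg _
  rw [abs_le]
  constructor
  · rw [hv]
    nlinarith [mul_le_mul_of_nonneg_right hM1 hnn]
  · rw [hv]
    nlinarith [mul_le_mul_of_nonneg_right hM2 hnn, hqv]

set_option maxHeartbeats 1000000 in
/-- A function that is both `λ`-semiconvex and `μ`-semiconcave on a convex open set
`C ⊂ ℝⁿ` is differentiable on `C` with locally Lipschitz gradient (`C^{1,1}_loc`). -/
theorem semiconvex_semiconcave_C11 {n : ℕ} (C : Set (EuclideanSpace ℝ (Fin n)))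
    (hCo : IsOpen C) (hCc : Convex ℝ C) (u : EuclideanSpace ℝ (Fin n) → ℝ)
    (lam mu : ℝ) (hlam : 0 ≤ lam) (hmu : 0 ≤ mu)
    (hsc : ConvexOn ℝ C (fun x => u x + (lam / 2) * ‖x‖ ^ 2))
    (hscc : ConvexOn ℝ C (fun x => -u x + (mu / 2) * ‖x‖ ^ 2)) :
    (∀ x ∈ C, DifferentiableAt ℝ u x) ∧
      ∀ x ∈ C, ∃ K : NNReal, ∃ t ∈ 𝓝 x,
        LipschitzOnWith K (fun y => gradient u y) (t ∩ C) := by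
  set M := max lam mu with hMdef
  have hM : 0 ≤ M := le_trans hlam (le_max_left _ _)
  have H : ∀ x : EuclideanSpace ℝ (Fin n), ∃ v, x ∈ C →
      ∀ y ∈ C, |u y - u x - ⟪v, y - x⟫| ≤ (M / 2) * ‖y - x‖ ^ 2 := by
    intro x
    by_cases hx : x ∈ C
    · exact (key_bound hCo hlam hmu hsc hscc hx).imp (fun v h _ => h)
    · exact ⟨0, fun h => absurd h hx⟩
  choose v hv using H
  have hgrad : ∀ x ∈ C, HasGradientAt u (v x) x := by
    intro x hx
    rw [hasGradientAt_iff_isLittleO, Asymptotics.isLittleO_iff]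
    intro c hc
    obtain ⟨ε, hε, hball⟩ := Metric.isOpen_iff.1 hCo x hx
    have hmem : Metric.ball x (min ε (2 * c / (M + 1))) ∈ 𝓝 x :=
      Metric.ball_mem_nhds _ (lt_min hε (by positivity))
    filter_upwards [hmem] with y hy
    have hyC : y ∈ C := hball (Metric.ball_subset_ball (min_le_left _ _) hy)
    have hb := hv x hx y hyC
    have hd : ‖y - x‖ < 2 * c / (M + 1) := by
      have := lt_of_lt_of_le (Metric.mem_ball.1 hy) (min_le_right _ _)
      rwa [dist_eq_norm] at this
    have h9 : ‖y - x‖ * (M + 1) < 2 * c := by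
      rw [lt_div_iff₀ (by positivity)] at hd
      linarith
    rw [Real.norm_eq_abs]
    have hnn : (0:ℝ) ≤ ‖y - x‖ := norm_nonneg _
    nlinarith [mul_le_mul_of_nonneg_left h9.le hnn, abs_nonneg (u y - u x - ⟪v x, y - x⟫)]
  have hgradeq : ∀ x ∈ C, gradient u x = v x := fun x hx => (hgrad x hx).gradient
  constructor
  · exact fun x hx => (hgrad x hx).differentiableAt
  · intro x hx
    obtain ⟨ε, hε, hball⟩ := Metric.isOpen_iff.1 hCo x hx
    refine ⟨(3 * M).toNNReal, Metric.ball x (ε / 3),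
      Metric.ball_mem_nhds _ (by positivity), ?_⟩
    rw [lipschitzOnWith_iff_dist_le_mul]
    intro a ha b hb
    obtain ⟨haB, haC⟩ := ha
    obtain ⟨hbB, hbC⟩ := hb
    rw [Real.coe_toNNReal _ (by positivity)]
    rw [hgradeq a haC, hgradeq b hbC, dist_eq_norm, dist_eq_norm]
    by_cases hvab : v a = v b
    · rw [hvab, sub_self, norm_zero]
      positivity
    have hab : a ≠ b := fun h => hvab (by rw [h])
    set w := v b - v a with hwdef
    have hw : 0 < ‖w‖ := by
      rw [norm_pos_iff]
      exact sub_ne_zero.2 (Ne.symm hvab)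
    set d := ‖a - b‖ with hddef
    have hd : 0 < d := by
      rw [hddef, norm_pos_iff]
      exact sub_ne_zero.2 hab
    set t := d / ‖w‖ with htdef
    have ht : 0 < t := div_pos hd hw
    set z := a + t • w with hzdef
    have hza : z - a = t • w := by rw [hzdef]; abel
    have hzan : ‖z - a‖ = d := by
      rw [hza, norm_smul, Real.norm_eq_abs, abs_of_pos ht, htdef]
      field_simp
    have hzC : z ∈ C := by
      apply hball
      rw [Metric.mem_ball]
      have t1 : dist z a = d := by rw [dist_eq_norm, hzan]
      have t2 : dist a x < ε / 3 := Metric.mem_ball.1 haB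
      have t3 : dist b x < ε / 3 := Metric.mem_ball.1 hbB
      have t4 : d ≤ dist a x + dist x b := by
        rw [hddef, ← dist_eq_norm]
        exact dist_triangle a x b
      have := dist_triangle z a x
      rw [dist_comm x b] at t4
      linarith
    have hzb : ‖z - b‖ ≤ 2 * d := by
      have : z - b = (z - a) + (a - b) := by abel
      rw [this]
      calc ‖(z - a) + (a - b)‖ ≤ ‖z - a‖ + ‖a - b‖ := norm_add_le _ _
        _ = 2 * d := by rw [hzan, ← hddef]; ring
    have B1 := (abs_le.1 (hv a haC z hzC)).2
    have B2 := (abs_le.1 (hv b hbC z hzC)).1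
    have B3 := (abs_le.1 (hv b hbC a haC)).2
    have e1 : ⟪v b, z - b⟫ - ⟪v b, a - b⟫ = ⟪v b, z - a⟫ := by
      rw [← inner_sub_right]
      congr 1
      abel
    have e2 : ⟪v b, z - a⟫ - ⟪v a, z - a⟫ = ⟪w, z - a⟫ := by
      rw [hwdef, inner_sub_left]
    have e3 : ⟪w, z - a⟫ = d * ‖w‖ := by
      rw [hza, real_inner_smul_right, real_inner_self_eq_norm_sq, htdef]
      field_simp
    clear_value w d t z
    rw [hzan] at B1
    rw [← hddef] at B3
    have main : d * ‖w‖ ≤ (M / 2) * d ^ 2 + (M / 2) * ‖z - b‖ ^ 2 + (M / 2) * d ^ 2 := by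
      linarith [B1, B2, B3, e1, e2, e3]
    have hzb2 : ‖z - b‖ ^ 2 ≤ (2 * d) ^ 2 := pow_le_pow_left₀ (norm_nonneg _) hzb 2
    have h10 : (M / 2) * ‖z - b‖ ^ 2 ≤ (M / 2) * (2 * d) ^ 2 :=
      mul_le_mul_of_nonneg_left hzb2 (by positivity)
    have h11 : d * ‖w‖ ≤ 3 * M * d ^ 2 := by nlinarith [main, h10]
    have hfin : ‖w‖ ≤ 3 * M * d := by nlinarith [h11, hd]
    rw [show v a - v b = -w by rw [hwdef]; abel, norm_neg]
    exact hfin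
end
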